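/- arXiv:gr-qc/0703038 — 5 statements merged into one kernel-verified Lean document; each statement's English description precedes it below -/
import Mathlib

section
/- If |S| ≤ 2Σ with 0 ≤ Σ ≤ 1, and q = 2Σ² + (1/2)·((3γ−2)+(2−γ)V²)/(1+(γ−1)V²)·Ω with Ω = 1 − Σ² − A² − N² ≥ 0, 0 ≤ V < 1, A, N real, then for 0 < γ < 6/7 the quantity 2(1−γ)q + (2−γ) + γS is strictly positive. -/
/-! Write `E = 2(1-γ)q + (2-γ) + γS`. The tilt factor
`((3γ-2) + (2-γ)V²)/(1 + (γ-1)V²)` is at least its value `3γ-2` at `V = 0`, and `S ≥ -2Σ`, so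
`E ≥ 4(1-γ)Σ² - 2γΣ + (2-γ) + (1-γ)(3γ-2)Ω`. This bound is affine in `Ω ∈ [0, 1-Σ²]`, hence
minimal at an endpoint, where it is a quadratic in `Σ ∈ [0,1]` taking the value `6-7γ` at
`Σ = 1`. In the Bernstein basis `Σ², Σ(1-Σ), (1-Σ)²` both endpoint quadratics have
nonnegative coefficients, with the coefficients of `Σ²` and `(1-Σ)²` positive exactly when
`0 < γ < 6/7`. -/

lemma bernstein_quadratic_pos {a b c x : ℝ} (ha : 0 < a) (hb : 0 ≤ b) (hc : 0 < c)
    (hx0 : 0 ≤ x) (hx1 : x ≤ 1) :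
    0 < a * x ^ 2 + b * (x * (1 - x)) + c * (1 - x) ^ 2 := by
  have hmid : 0 ≤ b * (x * (1 - x)) := mul_nonneg hb (mul_nonneg hx0 (by linarith))
  rcases hx0.eq_or_lt with rfl | hxpos
  · norm_num [hc]
  · nlinarith [mul_pos ha (pow_pos hxpos 2), mul_nonneg hc.le (sq_nonneg (1 - x))]

lemma three_mul_sub_two_le_tilt_ratio {γ V : ℝ} (hγ0 : 0 ≤ γ) (hγ1 : γ ≤ 4 / 3)
    (hG : 0 < 1 + (γ - 1) * V ^ 2) :
    3 * γ - 2 ≤ ((3 * γ - 2) + (2 - γ) * V ^ 2) / (1 + (γ - 1) * V ^ 2) := by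
  rw [le_div_iff₀ hG]
  have hgap : 0 ≤ γ * (4 - 3 * γ) * V ^ 2 :=
    mul_nonneg (mul_nonneg hγ0 (by linarith)) (sq_nonneg V)
  linarith [show (3 * γ - 2) + (2 - γ) * V ^ 2 - (3 * γ - 2) * (1 + (γ - 1) * V ^ 2)
    = γ * (4 - 3 * γ) * V ^ 2 by ring]

lemma shear_density_bound_pos {γ Sig Ω : ℝ} (hγ0 : 0 < γ) (hγ1 : γ < 6 / 7)
    (hSig0 : 0 ≤ Sig) (hSig1 : Sig ≤ 1) (hΩ0 : 0 ≤ Ω) (hΩ1 : Ω ≤ 1 - Sig ^ 2) :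
    0 < 4 * (1 - γ) * Sig ^ 2 - 2 * γ * Sig + (2 - γ) + (1 - γ) * (3 * γ - 2) * Ω := by
  rcases le_or_gt 0 (3 * γ - 2) with hγ | hγ
  · have hΩterm : 0 ≤ (1 - γ) * (3 * γ - 2) * Ω := mul_nonneg (mul_nonneg (by linarith) hγ) hΩ0
    have := bernstein_quadratic_pos (a := 6 - 7 * γ) (b := 4 - 4 * γ) (c := 2 - γ)
      (by linarith) (by linarith) (by linarith) hSig0 hSig1
    linarith [show (6 - 7 * γ) * Sig ^ 2 + (4 - 4 * γ) * (Sig * (1 - Sig)) + (2 - γ) * (1 - Sig) ^ 2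
      = 4 * (1 - γ) * Sig ^ 2 - 2 * γ * Sig + (2 - γ) by ring]
  · have hΩterm : (1 - γ) * (3 * γ - 2) * (1 - Sig ^ 2) ≤ (1 - γ) * (3 * γ - 2) * Ω :=
      mul_le_mul_of_nonpos_left hΩ1 (mul_nonpos_of_nonneg_of_nonpos (by linarith) hγ.le)
    have := bernstein_quadratic_pos (a := 6 - 7 * γ) (b := 6 * γ * (1 - γ))
      (c := γ * (4 - 3 * γ)) (by linarith) (mul_nonneg (by linarith) (by linarith))
      (mul_pos hγ0 (by linarith)) hSig0 hSig1
    linarith [show (6 - 7 * γ) * Sig ^ 2 + 6 * γ * (1 - γ) * (Sig * (1 - Sig))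
        + γ * (4 - 3 * γ) * (1 - Sig) ^ 2
      = 4 * (1 - γ) * Sig ^ 2 - 2 * γ * Sig + (2 - γ) + (1 - γ) * (3 * γ - 2) * (1 - Sig ^ 2)
      by ring]

theorem stmt_0 (Sig S A N V Ω γ q : ℝ)
    (hSig0 : 0 ≤ Sig) (hSig1 : Sig ≤ 1) (hS : |S| ≤ 2 * Sig)
    (hV0 : 0 ≤ V) (hV1 : V < 1)
    (hγ0 : 0 < γ) (hγ1 : γ < 6 / 7)
    (hΩ : Ω = 1 - Sig^2 - A^2 - N^2) (hΩ0 : 0 ≤ Ω)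
    (hq : q = 2 * Sig^2 + (1/2) * ((3*γ - 2) + (2 - γ) * V^2) / (1 + (γ - 1) * V^2) * Ω) :
    0 < 2 * (1 - γ) * q + (2 - γ) + γ * S := by
  set D := ((3 * γ - 2) + (2 - γ) * V ^ 2) / (1 + (γ - 1) * V ^ 2) with hD
  have hG : 0 < 1 + (γ - 1) * V ^ 2 := by nlinarith [sq_nonneg V]
  have hDlow : (1 - γ) * (3 * γ - 2) * Ω ≤ (1 - γ) * D * Ω := by
    gcongr
    · linarith
    · exact three_mul_sub_two_le_tilt_ratio hγ0.le (by linarith) hG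
  have hSlow : -(2 * Sig) ≤ S := neg_le_of_abs_le hS
  have hΩ1 : Ω ≤ 1 - Sig ^ 2 := by nlinarith [sq_nonneg A, sq_nonneg N]
  have hbound := shear_density_bound_pos hγ0 hγ1 hSig0 hSig1 hΩ0 hΩ1
  have hexpand : 2 * (1 - γ) * q + (2 - γ) + γ * S
      = 4 * (1 - γ) * Sig ^ 2 + (1 - γ) * D * Ω + (2 - γ) + γ * S := by
    rw [hq, hD]; ring
  have hγS : γ * -(2 * Sig) ≤ γ * S := mul_le_mul_of_nonneg_left hSlow hγ0.le
  linarith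
end

section
/- With q, Σ, Ω, V, G₊ as in the constrained Bianchi system (Ω = 1 − Σ² − A² − N², G₊ = 1 + (γ−1)V², q = 2Σ² + (1/2)·((3γ−2)+(2−γ)V²)Ω/G₊), |S| ≤ 2Σ, 0 ≤ V < 1, 0 ≤ Σ ≤ 1, Ω ≥ 0, one has the identity-style lower bound 2(1−γ)q + (2−γ) + γS ≥ (6−7γ)Σ² + 2(1−γ)(N² + A²) + γ(1−γ)(V²+3)Ω/G₊. -/
theorem stmt_2 (Sig S A N V Ω γ q G : ℝ)
    (hγ0 : 0 < γ) (hγ1 : γ < 1)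
    (hSig0 : 0 ≤ Sig) (hSig1 : Sig ≤ 1) (hS : |S| ≤ 2 * Sig)
    (hV0 : 0 ≤ V) (hV1 : V < 1)
    (hΩ : Ω = 1 - Sig^2 - A^2 - N^2) (hΩ0 : 0 ≤ Ω)
    (hG : G = 1 + (γ - 1) * V^2)
    (hq : q = 2 * Sig^2 + (1/2) * ((3*γ - 2) + (2 - γ) * V^2) * Ω / G) :
    2 * (1 - γ) * q + (2 - γ) + γ * S ≥
      (6 - 7*γ) * Sig^2 + 2 * (1 - γ) * (N^2 + A^2) + γ * (1 - γ) * (V^2 + 3) * Ω / G := by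
  have hV2 : V^2 < 1 := by nlinarith
  have hG0 : 0 < G := by nlinarith
  rw [abs_le] at hS
  have key : (2 * (1 - γ) * q + (2 - γ) + γ * S) -
      ((6 - 7*γ) * Sig^2 + 2 * (1 - γ) * (N^2 + A^2) + γ * (1 - γ) * (V^2 + 3) * Ω / G)
      = γ * (Sig^2 + 1 + S) := by
    subst hq hΩ
    field_simp [hG0.ne']
    subst hG; ring
  nlinarith [sq_nonneg (Sig - 1), hS.1]
end

section
/- For the Collins equilibrium point C(h): with h < 0, 2/3 < γ < 2(1−h)/(1−3h), and Σ₊ = −(3γ−2)/4, Σ₋ = (√(−3h)/4)(3γ−2), N² = (3/16)(3γ−2)(2−γ), A = √(−3h)·N, Ω = (3/4)[(2−γ)+h(3γ−2)], the Friedmann constraint Σ₊² + Σ₋² + N² + A² + Ω = 1 holds and Ω > 0. -/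
/-!
Since `Σ₋ = -√(-3h) Σ₊` and `A = √(-3h) N`, the four squares add up to
`(1 - 3h)(Σ₊² + N²) = (1 - 3h)(3γ - 2)/4`, and adding `Ω` gives `1` identically.
Moreover `(2 - γ) + h(3γ - 2) = 2(1 - h) - γ(1 - 3h)`, so `Ω > 0` is exactly the upper bound on `γ`,
while `h < 0` and `γ > 2/3` make the radicands `-3h` and `(3γ - 2)(2 - γ)` nonnegative.
-/

namespace Collins

theorem friedmann_constraint {h γ s n : ℝ} (hs : s ^ 2 = -3 * h)
    (hn : n ^ 2 = (3/16) * (3*γ - 2) * (2 - γ)) :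
    (-(3*γ - 2) / 4) ^ 2 + (s / 4 * (3*γ - 2)) ^ 2 + n ^ 2 + (s * n) ^ 2
      + (3/4) * ((2 - γ) + h * (3*γ - 2)) = 1 := by
  linear_combination ((3*γ - 2) ^ 2 / 16 + n ^ 2) * hs + (1 - 3*h) * hn

theorem omega_pos_iff {h γ : ℝ} (hh : h < 1/3) :
    0 < (2 - γ) + h * (3*γ - 2) ↔ γ < 2 * (1 - h) / (1 - 3*h) := by
  rw [lt_div_iff₀ (by linarith)]
  constructor <;> intro <;> linarith

theorem gamma_lt_two {h γ : ℝ} (hh : h < 0) (hγ : 2/3 < γ)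
    (hΩ : 0 < (2 - γ) + h * (3*γ - 2)) : γ < 2 := by
  nlinarith

end Collins

theorem stmt_8 (h γ : ℝ) (hh : h < 0) (hγ1 : 2/3 < γ)
    (hγ2 : γ < 2 * (1 - h) / (1 - 3*h)) :
    let Sp : ℝ := -(3*γ - 2) / 4
    let Sm : ℝ := Real.sqrt (-3*h) / 4 * (3*γ - 2)
    let N : ℝ := Real.sqrt ((3/16) * (3*γ - 2) * (2 - γ))
    let A : ℝ := Real.sqrt (-3*h) * N
    let Ω : ℝ := (3/4) * ((2 - γ) + h * (3*γ - 2))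
    Sp^2 + Sm^2 + N^2 + A^2 + Ω = 1 ∧ 0 < Ω := by
  intro Sp Sm N A Ω
  have hΩ : 0 < (2 - γ) + h * (3*γ - 2) := (Collins.omega_pos_iff (by linarith)).mpr hγ2
  have hγ : γ < 2 := Collins.gamma_lt_two hh hγ1 hΩ
  have hN : 0 ≤ (3/16) * (3*γ - 2) * (2 - γ) := mul_nonneg (by linarith) (by linarith)
  exact ⟨Collins.friedmann_constraint (Real.sq_sqrt (by linarith)) (Real.sq_sqrt hN),
    mul_pos (by norm_num) hΩ⟩
end

section
/- For the extremely tilted point E₂(h) with −1/9 < h ≤ 0: the quantities Σ₊ = −2(5+9h)/(25+9h), N² = 12/(25+9h), Σ₋ = (2/3)√(−3h)N², A = √(−3h)N, Ω = 6(1+9h)/(25+9h), Σ_⊥² = 15(1+h)(5−27h)/(25+9h)², v₁ = (2/3)√(−3h)N, v_⊥² = 25(1+h)/(25+9h) satisfy the Friedmann constraint Σ₊² + Σ₋² + Σ_⊥² + N² + A² + Ω = 1 and the extreme tilt condition v₁² + v_⊥² = 1. -/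
theorem stmt_10 (h : ℝ) (hh1 : -1/9 < h) (hh2 : h ≤ 0) :
    let N : ℝ := Real.sqrt (12 / (25 + 9*h))
    let Sp : ℝ := -2 * (5 + 9*h) / (25 + 9*h)
    let Sm : ℝ := (2/3) * Real.sqrt (-3*h) * N^2
    let A : ℝ := Real.sqrt (-3*h) * N
    let Ω : ℝ := 6 * (1 + 9*h) / (25 + 9*h)
    let Sperpsq : ℝ := 15 * (1 + h) * (5 - 27*h) / (25 + 9*h)^2
    let v₁ : ℝ := (2/3) * Real.sqrt (-3*h) * N
    let vperpsq : ℝ := 25 * (1 + h) / (25 + 9*h)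
    Sp^2 + Sm^2 + Sperpsq + N^2 + A^2 + Ω = 1 ∧ v₁^2 + vperpsq = 1 := by
  intro N Sp Sm A Ω Sperpsq v₁ vperpsq
  have hd : (0:ℝ) < 25 + 9*h := by linarith
  have hN2 : N^2 = 12 / (25 + 9*h) := Real.sq_sqrt (by positivity)
  have hs2 : Real.sqrt (-3*h) ^ 2 = -3*h := Real.sq_sqrt (by linarith)
  have hd' : (25 + 9*h) ≠ 0 := ne_of_gt hd
  constructor
  · show Sp^2 + ((2/3) * Real.sqrt (-3*h) * N^2)^2 + Sperpsq + N^2 + (Real.sqrt (-3*h) * N)^2 + Ω = 1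
    rw [mul_pow, mul_pow, mul_pow, hs2, hN2]
    show (-2 * (5 + 9*h) / (25 + 9*h))^2 + (2/3)^2 * (-3*h) * (12 / (25 + 9*h))^2 + 15 * (1 + h) * (5 - 27*h) / (25 + 9*h)^2 + 12 / (25 + 9*h) + (-3*h) * (12 / (25 + 9*h)) + 6 * (1 + 9*h) / (25 + 9*h) = 1
    field_simp
    ring
  · show ((2/3) * Real.sqrt (-3*h) * N)^2 + vperpsq = 1
    rw [mul_pow, mul_pow, hs2, hN2]
    show (2/3)^2 * (-3*h) * (12 / (25 + 9*h)) + 25 * (1 + h) / (25 + 9*h) = 1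
    field_simp
    rw [div_eq_iff (by linarith)]
    ring
end

section
/- For the point E₁⁺(h) with 0 ≤ k < 1/3, the Friedmann constraint holds: Σ₊² + Σ₋² + Σ₁₂² + N² + A² + Ω = 1, where Σ₊ = −(15k²−2k−5)/(4(1+k)(3k−2)), Σ₋ = √3(21k²−10k−3)/(12(1+k)(3k−2)), Σ₁₂² = (3−7k²)(1−3k)²/(12(2−3k)²(1+k)²), N² = (1−k)/(2(2−3k)(1+k)²), A² = 3k²N², Ω = (1−9k²)(1−k)/(2(2−3k)(1+k)²). -/
theorem stmt_12 (k : ℝ) (hk0 : 0 ≤ k) (hk1 : k < 1/3) :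
    let Sp : ℝ := -(15*k^2 - 2*k - 5) / (4 * (1 + k) * (3*k - 2))
    let Sm : ℝ := Real.sqrt 3 * (21*k^2 - 10*k - 3) / (12 * (1 + k) * (3*k - 2))
    let S12sq : ℝ := (3 - 7*k^2) * (1 - 3*k)^2 / (12 * (2 - 3*k)^2 * (1 + k)^2)
    let Nsq : ℝ := (1 - k) / (2 * (2 - 3*k) * (1 + k)^2)
    let Asq : ℝ := 3 * k^2 * Nsq
    let Ω : ℝ := (1 - 9*k^2) * (1 - k) / (2 * (2 - 3*k) * (1 + k)^2)
    Sp^2 + Sm^2 + S12sq + Nsq + Asq + Ω = 1 := by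
  intro Sp Sm S12sq Nsq Asq Ω
  have h1 : (1 + k) ≠ 0 := by nlinarith
  have h2 : (3*k - 2) ≠ 0 := by nlinarith
  have h3 : (2 - 3*k) ≠ 0 := by nlinarith
  have hs : Real.sqrt 3 ^ 2 = 3 := Real.sq_sqrt (by norm_num)
  simp only [Sp, Sm, S12sq, Nsq, Asq, Ω]
  have hSm : (Real.sqrt 3 * (21*k^2 - 10*k - 3) / (12 * (1 + k) * (3*k - 2)))^2
      = 3 * (21*k^2 - 10*k - 3)^2 / (12 * (1 + k) * (3*k - 2))^2 := by
    rw [div_pow, mul_pow, hs]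
  rw [hSm]
  rw [div_pow, div_add_div _ _ (by positivity) (by positivity)]
  rw [div_add_div _ _ (by positivity) (by positivity), div_add_div _ _ (by positivity) (by positivity), mul_div_assoc', div_add_div _ _ (by positivity) (by positivity), div_add_div _ _ (by positivity) (by positivity), div_eq_one_iff_eq (by positivity)]
  ring
end
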